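/- Let N ≥ 1 and α₁, β₁ ∈ [1, ∞) with α₁ ≤ β₁ and 1/α₁ + 1/β₁ ≤ 4/N, and set 1/γ₁ := 1 − (1/2)(1/α₁ + 1/β₁). Let k : ℝ^N × ℝ^N → ℝ be measurable and symmetric (k(x,y) = k(y,x) for all x, y) with A := (∫ (∫ |k(x,y)|^{α₁} dy)^{β₁/α₁} dx)^{1/β₁} < ∞. Then for all measurable f, g : ℝ^N → ℝ with finite L^{γ₁} norms, ∫_{ℝ^N} |g(x)| (∫_{ℝ^N} |k(x,y)| |f(y)| dy) dx ≤ A ‖f‖_{L^{γ₁}} ‖g‖_{L^{γ₁}}, and the function x ↦ ∫ |k(x,y)||f(y)| dy has L^{γ₁'} norm at most A ‖f‖_{L^{γ₁}}, where γ₁' is the Hölder conjugate of γ₁. -/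

import Mathlib

/-!
Write `G(x) K(x,y) F(y)` as the geometric mean of `G(x)^{γt} K(x,y) F(y)^{γs}` and
`G(x)^{γs} K(x,y) F(y)^{γt}`, where `s = 1 - 1/α`, `t = 1 - 1/β`, so that `γ (s + t) = 2`.
Cauchy–Schwarz on the product space bounds the bilinear form by the geometric mean of the
integrals of these two functions. By the symmetry of `K` both integrals have the shape
`∫ Q(x)^{γt} ∫ K(x,y) P(y)^{γs} dy dx`, and Hölder in `y` (exponent `α`) followed by Hölder in
`x` (exponent `β`) bounds it by `‖K‖_{L^β_x L^α_y} ‖P‖_γ^{γs} ‖Q‖_γ^{γt}`.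

The bound on `‖K|f|‖_{γ'}` follows by duality, testing the bilinear bound against
`G = T^{γ'-1}` for truncations `T` of `K|f|`; these have finite `L^{γ'}` norm, so the factor
`‖T‖_{γ'}^{γ'/γ}` can be cancelled.
-/

open MeasureTheory Function
open scoped ENNReal

namespace ENNReal

theorem rpow_inv_two_mul_rpow_inv_two (u : ℝ≥0∞) {a b : ℝ} (ha : 0 ≤ a) (hb : 0 ≤ b) :
    (u ^ a) ^ (2⁻¹ : ℝ) * (u ^ b) ^ (2⁻¹ : ℝ) = u ^ ((a + b) / 2) := by
  rw [← rpow_mul, ← rpow_mul, ← rpow_add_of_nonneg _ _ (by positivity) (by positivity)]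
  ring_nf

theorem rpow_inv_two_mul_self (u : ℝ≥0∞) : u ^ (2⁻¹ : ℝ) * u ^ (2⁻¹ : ℝ) = u := by
  rw [← rpow_add_of_nonneg _ _ (by norm_num) (by norm_num)]
  norm_num

theorem rpow_inv_two_mul_rpow_inv_two_swap (w u v : ℝ≥0∞) {a b : ℝ} (ha : 0 ≤ a) (hb : 0 ≤ b) :
    (w * u ^ a * v ^ b) ^ (2⁻¹ : ℝ) * (w * u ^ b * v ^ a) ^ (2⁻¹ : ℝ) =
      w * u ^ ((a + b) / 2) * v ^ ((a + b) / 2) := by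
  have hhalf : (0 : ℝ) ≤ 2⁻¹ := by norm_num
  simp only [mul_rpow_of_nonneg _ _ hhalf]
  calc _ = (w ^ (2⁻¹ : ℝ) * w ^ (2⁻¹ : ℝ)) * ((u ^ a) ^ (2⁻¹ : ℝ) * (u ^ b) ^ (2⁻¹ : ℝ)) *
        ((v ^ b) ^ (2⁻¹ : ℝ) * (v ^ a) ^ (2⁻¹ : ℝ)) := by ring
    _ = _ := by
      rw [rpow_inv_two_mul_self, rpow_inv_two_mul_rpow_inv_two u ha hb,
        rpow_inv_two_mul_rpow_inv_two v hb ha, add_comm b a]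

theorem rpow_le_of_le_mul_rpow {a b : ℝ} (ha : 0 < a) (hab : a + b = 1) {I C : ℝ≥0∞}
    (hI : I ≠ ⊤) (h : I ≤ C * I ^ b) : I ^ a ≤ C := by
  rcases eq_or_ne I 0 with rfl | hI0
  · simp [zero_rpow_of_pos ha]
  have hIb0 : I ^ b ≠ 0 := (rpow_pos (pos_iff_ne_zero.2 hI0) hI).ne'
  have hIb : I ^ b ≠ ⊤ := rpow_ne_top_of_ne_zero hI0 hI
  rw [← ENNReal.mul_le_mul_iff_left hIb0 hIb, ← rpow_add _ _ hI0 hI, hab, rpow_one]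
  exact h

end ENNReal

section

variable {X : Type*} [MeasurableSpace X] {μ : Measure X}

/-- `‖K‖_{L^β_x L^α_y}`: the `L^α` norm in `y`, then the `L^β` norm in `x`. -/
noncomputable def mixedNorm (μ : Measure X) (α β : ℝ) (K : X → X → ℝ≥0∞) : ℝ≥0∞ :=
  (∫⁻ x, (∫⁻ y, K x y ^ α ∂μ) ^ (β / α) ∂μ) ^ (1 / β)

theorem lintegral_mul_rpow_le_of_one_le {p c : ℝ} (hp : 1 ≤ p) {K F : X → ℝ≥0∞}
    (hK : AEMeasurable K μ) (hF : AEMeasurable F μ) :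
    ∫⁻ y, K y * F y ^ (c * (1 - 1 / p)) ∂μ ≤
      (∫⁻ y, K y ^ p ∂μ) ^ (1 / p) * (∫⁻ y, F y ^ c ∂μ) ^ (1 - 1 / p) := by
  have hp0 : 0 < p := by linarith
  convert ENNReal.lintegral_mul_norm_pow_le (hK.pow_const p) (hF.pow_const c)
    (one_div_nonneg.2 hp0.le) (sub_nonneg.2 ((div_le_one hp0).2 hp)) (add_sub_cancel _ _)
    using 3 with y
  rw [← ENNReal.rpow_mul, ← ENNReal.rpow_mul, mul_one_div_cancel hp0.ne', ENNReal.rpow_one]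

theorem lintegral_mul_lintegral_kernel_le_mixedNorm [SFinite μ] {α β c : ℝ} (hα : 1 ≤ α)
    (hβ : 1 ≤ β) {K : X → X → ℝ≥0∞} (hK : Measurable (uncurry K)) {P Q : X → ℝ≥0∞}
    (hP : Measurable P) (hQ : Measurable Q) :
    ∫⁻ x, Q x ^ (c * (1 - 1 / β)) * ∫⁻ y, K x y * P y ^ (c * (1 - 1 / α)) ∂μ ∂μ ≤
      mixedNorm μ α β K * (∫⁻ y, P y ^ c ∂μ) ^ (1 - 1 / α) *
        (∫⁻ x, Q x ^ c ∂μ) ^ (1 - 1 / β) := by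
  set W : X → ℝ≥0∞ := fun x => (∫⁻ y, K x y ^ α ∂μ) ^ (1 / α)
  have hW : Measurable W := ((hK.pow_const α).lintegral_prod_right').pow_const _
  have hWβ : ∀ x, W x ^ β = (∫⁻ y, K x y ^ α ∂μ) ^ (β / α) := fun x => by
    rw [← ENNReal.rpow_mul, one_div_mul_eq_div]
  calc ∫⁻ x, Q x ^ (c * (1 - 1 / β)) * ∫⁻ y, K x y * P y ^ (c * (1 - 1 / α)) ∂μ ∂μ
      ≤ ∫⁻ x, W x * Q x ^ (c * (1 - 1 / β)) * (∫⁻ y, P y ^ c ∂μ) ^ (1 - 1 / α) ∂μ := by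
        refine lintegral_mono fun x => ?_
        rw [mul_comm (W x), mul_assoc]
        gcongr
        exact lintegral_mul_rpow_le_of_one_le hα (hK.comp measurable_prodMk_left).aemeasurable
          hP.aemeasurable
    _ = (∫⁻ x, W x * Q x ^ (c * (1 - 1 / β)) ∂μ) * (∫⁻ y, P y ^ c ∂μ) ^ (1 - 1 / α) :=
        lintegral_mul_const _ (hW.mul (hQ.pow_const _))
    _ ≤ (∫⁻ x, W x ^ β ∂μ) ^ (1 / β) * (∫⁻ x, Q x ^ c ∂μ) ^ (1 - 1 / β) *
          (∫⁻ y, P y ^ c ∂μ) ^ (1 - 1 / α) := by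
        gcongr
        exact lintegral_mul_rpow_le_of_one_le hβ hW.aemeasurable hQ.aemeasurable
    _ = _ := by
        simp only [hWβ]
        rw [mixedNorm]
        ring

theorem lintegral_prod_mul_kernel [SFinite μ] {K : X → X → ℝ≥0∞} (hK : Measurable (uncurry K))
    {P Q : X → ℝ≥0∞} (hP : Measurable P) (hQ : Measurable Q) :
    ∫⁻ z, K z.1 z.2 * Q z.1 * P z.2 ∂μ.prod μ = ∫⁻ x, Q x * ∫⁻ y, K x y * P y ∂μ ∂μ := by
  have hm : Measurable fun z : X × X => K z.1 z.2 * Q z.1 * P z.2 :=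
    (hK.mul (hQ.comp measurable_fst)).mul (hP.comp measurable_snd)
  rw [lintegral_prod _ hm.aemeasurable]
  refine lintegral_congr fun x => ?_
  have hKP : Measurable fun y => K x y * P y := (hK.comp measurable_prodMk_left).mul hP
  rw [← lintegral_const_mul _ hKP]
  refine lintegral_congr fun y => ?_
  ring

theorem lintegral_prod_mul_kernel_swap_of_symm [SFinite μ] {K : X → X → ℝ≥0∞}
    (hsymm : ∀ x y, K x y = K y x) (P Q : X → ℝ≥0∞) :
    ∫⁻ z, K z.1 z.2 * Q z.1 * P z.2 ∂μ.prod μ = ∫⁻ z, K z.1 z.2 * P z.1 * Q z.2 ∂μ.prod μ := by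
  rw [← lintegral_prod_swap]
  refine lintegral_congr fun z => ?_
  rw [Prod.fst_swap, Prod.snd_swap, hsymm, mul_right_comm]

theorem lintegral_mul_lintegral_kernel_le_of_symm [SFinite μ] {α β γ : ℝ} (hα : 1 ≤ α)
    (hβ : 1 ≤ β) (hγ : 0 < γ) (hγdef : 1 / γ = 1 - (1 / α + 1 / β) / 2)
    {K : X → X → ℝ≥0∞} (hK : Measurable (uncurry K)) (hsymm : ∀ x y, K x y = K y x)
    {F G : X → ℝ≥0∞} (hF : Measurable F) (hG : Measurable G) :
    ∫⁻ x, G x * ∫⁻ y, K x y * F y ∂μ ∂μ ≤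
      mixedNorm μ α β K * (∫⁻ x, F x ^ γ ∂μ) ^ (1 / γ) * (∫⁻ x, G x ^ γ ∂μ) ^ (1 / γ) := by
  set s := 1 - 1 / α
  set t := 1 - 1 / β
  have hs : 0 ≤ s := sub_nonneg.2 ((div_le_one (by linarith)).2 hα)
  have ht : 0 ≤ t := sub_nonneg.2 ((div_le_one (by linarith)).2 hβ)
  have hst : (s + t) / 2 = 1 / γ := by rw [hγdef]; ring
  have hγst : (γ * t + γ * s) / 2 = 1 := by
    rw [← mul_add, mul_div_assoc, add_comm, hst, mul_one_div_cancel hγ.ne']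
  set A := mixedNorm μ α β K
  set IF := ∫⁻ x, F x ^ γ ∂μ
  set IG := ∫⁻ x, G x ^ γ ∂μ
  set Φ₁ : X × X → ℝ≥0∞ := fun z => K z.1 z.2 * G z.1 ^ (γ * t) * F z.2 ^ (γ * s)
  set Φ₂ : X × X → ℝ≥0∞ := fun z => K z.1 z.2 * G z.1 ^ (γ * s) * F z.2 ^ (γ * t)
  have hΦ₁m : Measurable Φ₁ :=
    (hK.mul ((hG.pow_const _).comp measurable_fst)).mul ((hF.pow_const _).comp measurable_snd)
  have hΦ₂m : Measurable Φ₂ :=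
    (hK.mul ((hG.pow_const _).comp measurable_fst)).mul ((hF.pow_const _).comp measurable_snd)
  have hsplit : ∀ z : X × X, K z.1 z.2 * G z.1 * F z.2 = Φ₁ z ^ (2⁻¹ : ℝ) * Φ₂ z ^ (2⁻¹ : ℝ) :=
    fun z => by
      rw [ENNReal.rpow_inv_two_mul_rpow_inv_two_swap _ _ _ (by positivity) (by positivity), hγst,
        ENNReal.rpow_one, ENNReal.rpow_one]
  have hΦ₁ : ∫⁻ z, Φ₁ z ∂μ.prod μ ≤ A * IF ^ s * IG ^ t := by
    rw [lintegral_prod_mul_kernel hK (hF.pow_const _) (hG.pow_const _)]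
    exact lintegral_mul_lintegral_kernel_le_mixedNorm hα hβ hK hF hG
  have hΦ₂ : ∫⁻ z, Φ₂ z ∂μ.prod μ ≤ A * IF ^ t * IG ^ s := by
    rw [lintegral_prod_mul_kernel_swap_of_symm hsymm (fun y => F y ^ (γ * t))
        fun x => G x ^ (γ * s),
      lintegral_prod_mul_kernel hK (hG.pow_const _) (hF.pow_const _), mul_right_comm]
    exact lintegral_mul_lintegral_kernel_le_mixedNorm hα hβ hK hG hF
  calc ∫⁻ x, G x * ∫⁻ y, K x y * F y ∂μ ∂μ
      = ∫⁻ z, Φ₁ z ^ (2⁻¹ : ℝ) * Φ₂ z ^ (2⁻¹ : ℝ) ∂μ.prod μ := by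
        rw [← lintegral_prod_mul_kernel hK hF hG]
        exact lintegral_congr hsplit
    _ ≤ (∫⁻ z, Φ₁ z ∂μ.prod μ) ^ (2⁻¹ : ℝ) * (∫⁻ z, Φ₂ z ∂μ.prod μ) ^ (2⁻¹ : ℝ) :=
        ENNReal.lintegral_mul_norm_pow_le hΦ₁m.aemeasurable hΦ₂m.aemeasurable
          (by norm_num) (by norm_num) (by norm_num)
    _ ≤ (A * IF ^ s * IG ^ t) ^ (2⁻¹ : ℝ) * (A * IF ^ t * IG ^ s) ^ (2⁻¹ : ℝ) := by
        gcongr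
    _ = A * IF ^ (1 / γ) * IG ^ (1 / γ) := by
        rw [ENNReal.rpow_inv_two_mul_rpow_inv_two_swap _ _ _ hs ht, hst]

theorem lintegral_rpow_le_of_le_of_lintegral_mul_le {p q : ℝ} (hpq : p.HolderConjugate q)
    {T H : X → ℝ≥0∞} (hH : Measurable H) (hHT : H ≤ T) (hHq : ∫⁻ x, H x ^ q ∂μ ≠ ⊤)
    {C : ℝ≥0∞} (hC : ∀ G : X → ℝ≥0∞, Measurable G →
      ∫⁻ x, G x * T x ∂μ ≤ C * (∫⁻ x, G x ^ p ∂μ) ^ (1 / p)) :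
    (∫⁻ x, H x ^ q ∂μ) ^ (1 / q) ≤ C := by
  have hq1 : 0 ≤ q - 1 := sub_nonneg.2 hpq.symm.lt.le
  refine ENNReal.rpow_le_of_le_mul_rpow (b := 1 / p) (one_div_pos.2 hpq.symm.pos)
    (by rw [one_div, one_div, add_comm]; exact hpq.inv_add_inv_eq_one) hHq ?_
  calc ∫⁻ x, H x ^ q ∂μ ≤ ∫⁻ x, H x ^ (q - 1) * T x ∂μ := by
        refine lintegral_mono fun x => ?_
        calc H x ^ q = H x ^ (q - 1) * H x ^ (1 : ℝ) := by
              rw [← ENNReal.rpow_add_of_nonneg _ _ hq1 zero_le_one, sub_add_cancel]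
          _ ≤ H x ^ (q - 1) * T x := by
              rw [ENNReal.rpow_one]
              gcongr
              exact hHT x
    _ ≤ C * (∫⁻ x, (H x ^ (q - 1)) ^ p ∂μ) ^ (1 / p) := hC _ (hH.pow_const _)
    _ = C * (∫⁻ x, H x ^ q ∂μ) ^ (1 / p) := by
        simp only [← ENNReal.rpow_mul, hpq.symm.sub_one_mul_conj]

theorem iSup_indicator_spanningSets_min_natCast [SigmaFinite μ] (T : X → ℝ≥0∞) (x : X) :
    ⨆ n : ℕ, (spanningSets μ n).indicator (fun x => min (T x) n) x = T x := by
  refine le_antisymm (iSup_le fun n => ?_) ?_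
  · exact (Set.indicator_le_self _ _ x).trans (min_le_left _ _)
  · obtain ⟨n₀, hn₀⟩ : ∃ n, x ∈ spanningSets μ n := ⟨_, mem_spanningSetsIndex μ x⟩
    calc T x = ⨆ n : ℕ, min (T x) n := by
          rw [← inf_iSup_eq, ENNReal.iSup_natCast, inf_top_eq]
      _ ≤ ⨆ n : ℕ, (spanningSets μ n).indicator (fun x => min (T x) n) x := by
          refine iSup_mono' fun n => ⟨max n n₀, ?_⟩
          rw [Set.indicator_of_mem (monotone_spanningSets μ (le_max_right _ _) hn₀)]
          gcongr
          exact le_max_left _ _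

theorem lintegral_rpow_le_of_lintegral_mul_le [SigmaFinite μ] {p q : ℝ}
    (hpq : p.HolderConjugate q) {T : X → ℝ≥0∞} (hT : Measurable T) {C : ℝ≥0∞}
    (hC : ∀ G : X → ℝ≥0∞, Measurable G →
      ∫⁻ x, G x * T x ∂μ ≤ C * (∫⁻ x, G x ^ p ∂μ) ^ (1 / p)) :
    (∫⁻ x, T x ^ q ∂μ) ^ (1 / q) ≤ C := by
  set H : ℕ → X → ℝ≥0∞ := fun n => (spanningSets μ n).indicator fun x => min (T x) n
  have hq : 0 < q := hpq.symm.pos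
  have hH : ∀ n, Measurable (H n) := fun n =>
    (hT.min measurable_const).indicator (measurableSet_spanningSets μ n)
  have hH_mono : Monotone H := by
    intro m n hmn x
    by_cases hx : x ∈ spanningSets μ m
    · simp only [H, Set.indicator_of_mem hx,
        Set.indicator_of_mem (monotone_spanningSets μ hmn hx)]
      gcongr
    · simp only [H, Set.indicator_of_notMem hx, zero_le]
  have hHq : ∀ n, ∫⁻ x, H n x ^ q ∂μ ≠ ⊤ := by
    intro n
    refine ne_top_of_le_ne_top ?_ (lintegral_mono (g := (spanningSets μ n).indicator
      fun _ => (n : ℝ≥0∞) ^ q) fun x => ?_)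
    · rw [lintegral_indicator_const (measurableSet_spanningSets μ n)]
      exact ENNReal.mul_ne_top (ENNReal.rpow_ne_top_of_nonneg hq.le (ENNReal.natCast_ne_top n))
        (measure_spanningSets_lt_top μ n).ne
    · by_cases hx : x ∈ spanningSets μ n
      · simp only [H, Set.indicator_of_mem hx]
        gcongr
        exact min_le_right _ _
      · simp only [H, Set.indicator_of_notMem hx, ENNReal.zero_rpow_of_pos hq, le_refl]
  have hHT : ∀ n, H n ≤ T := fun n x => (Set.indicator_le_self _ _ x).trans (min_le_left _ _)
  have hlim : ∫⁻ x, T x ^ q ∂μ = ⨆ n, ∫⁻ x, H n x ^ q ∂μ := by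
    rw [← lintegral_iSup (fun n => (hH n).pow_const q)
      fun m n hmn x => ENNReal.rpow_le_rpow (hH_mono hmn x) hq.le]
    refine lintegral_congr fun x => ?_
    rw [← iSup_indicator_spanningSets_min_natCast (μ := μ) T x]
    exact (ENNReal.orderIsoRpow q hq).map_iSup _
  calc (∫⁻ x, T x ^ q ∂μ) ^ (1 / q) = ⨆ n, (∫⁻ x, H n x ^ q ∂μ) ^ (1 / q) := by
        rw [hlim]
        exact (ENNReal.orderIsoRpow (1 / q) (one_div_pos.2 hq)).map_iSup _
    _ ≤ C := iSup_le fun n =>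
        lintegral_rpow_le_of_le_of_lintegral_mul_le hpq (hH n) (hHT n) (hHq n) hC

end

theorem symmetric_kernel_bilinear_bound_general (N : ℕ)
    (α₁ β₁ γ₁ γ₁' : ℝ)
    (hα₁ : 1 ≤ α₁) (hβ₁ : 1 ≤ β₁)
    (hγdef : 1 / γ₁ = 1 - (1 / α₁ + 1 / β₁) / 2) (hγ₁ : 1 ≤ γ₁)
    (hconj : 1 / γ₁ + 1 / γ₁' = 1)
    (k : EuclideanSpace ℝ (Fin N) → EuclideanSpace ℝ (Fin N) → ℝ)
    (hk : Measurable fun q : EuclideanSpace ℝ (Fin N) × EuclideanSpace ℝ (Fin N) => k q.1 q.2)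
    (hsymm : ∀ x y, k x y = k y x)
    (f g : EuclideanSpace ℝ (Fin N) → ℝ) (hf : Measurable f) (hg : Measurable g) :
    (∫⁻ x, ENNReal.ofReal |g x| * ∫⁻ y, ENNReal.ofReal (|k x y| * |f y|)) ≤
        (∫⁻ x, (∫⁻ y, ENNReal.ofReal |k x y| ^ α₁) ^ (β₁ / α₁)) ^ (1 / β₁) *
          (∫⁻ x, ENNReal.ofReal |f x| ^ γ₁) ^ (1 / γ₁) *
          (∫⁻ x, ENNReal.ofReal |g x| ^ γ₁) ^ (1 / γ₁) ∧
      (∫⁻ x, (∫⁻ y, ENNReal.ofReal (|k x y| * |f y|)) ^ γ₁') ^ (1 / γ₁') ≤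
        (∫⁻ x, (∫⁻ y, ENNReal.ofReal |k x y| ^ α₁) ^ (β₁ / α₁)) ^ (1 / β₁) *
          (∫⁻ x, ENNReal.ofReal |f x| ^ γ₁) ^ (1 / γ₁) := by
  set K := fun x y => ENNReal.ofReal |k x y|
  have hK : Measurable (uncurry K) := ENNReal.measurable_ofReal.comp hk.abs
  have hKsymm : ∀ x y, K x y = K y x := fun x y => by simp only [K, hsymm x y]
  have hF : Measurable fun y => ENNReal.ofReal |f y| := ENNReal.measurable_ofReal.comp hf.abs
  have hγ : γ₁.HolderConjugate γ₁' := by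
    have : 0 < 1 / α₁ + 1 / β₁ := by
      have := one_div_pos.2 (zero_lt_one.trans_le hα₁)
      have := one_div_pos.2 (zero_lt_one.trans_le hβ₁)
      positivity
    refine Real.holderConjugate_iff.2 ⟨?_, by simpa only [one_div] using hconj⟩
    exact (div_lt_one (by linarith)).1 (by linarith)
  have hbil := fun G (hG : Measurable G) => lintegral_mul_lintegral_kernel_le_of_symm
    (μ := volume) hα₁ hβ₁ (by linarith) hγdef hK hKsymm hF hG
  simp only [ENNReal.ofReal_mul (abs_nonneg _)]
  have hT : Measurable fun x => ∫⁻ y, K x y * ENNReal.ofReal |f y| :=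
    (hK.mul (hF.comp measurable_snd)).lintegral_prod_right'
  exact ⟨hbil _ (ENNReal.measurable_ofReal.comp hg.abs),
    lintegral_rpow_le_of_lintegral_mul_le hγ hT hbil⟩

/-- Bilinear bound for symmetric integral kernels: with
`1/γ₁ = 1 − (1/2)(1/α₁ + 1/β₁)` one has
`∫ |g| K(|f|) ≤ ‖k‖_{L_x^{β₁}L_y^{α₁}} ‖f‖_{γ₁} ‖g‖_{γ₁}` and
`‖K(|f|)‖_{γ₁'} ≤ ‖k‖_{L_x^{β₁}L_y^{α₁}} ‖f‖_{γ₁}`. -/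
theorem symmetric_kernel_bilinear_bound (N : ℕ) (hN : 1 ≤ N)
    (α₁ β₁ γ₁ γ₁' : ℝ)
    (hα₁ : 1 ≤ α₁) (hβ₁ : 1 ≤ β₁) (hαβ : α₁ ≤ β₁)
    (hsum : 1 / α₁ + 1 / β₁ ≤ 4 / N)
    (hγdef : 1 / γ₁ = 1 - (1 / α₁ + 1 / β₁) / 2) (hγ₁ : 1 ≤ γ₁)
    (hconj : 1 / γ₁ + 1 / γ₁' = 1)
    (k : EuclideanSpace ℝ (Fin N) → EuclideanSpace ℝ (Fin N) → ℝ)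
    (hk : Measurable fun q : EuclideanSpace ℝ (Fin N) × EuclideanSpace ℝ (Fin N) => k q.1 q.2)
    (hsymm : ∀ x y, k x y = k y x)
    (hA : (∫⁻ x, (∫⁻ y, ENNReal.ofReal |k x y| ^ α₁) ^ (β₁ / α₁)) ^ (1 / β₁) < ⊤)
    (f g : EuclideanSpace ℝ (Fin N) → ℝ) (hf : Measurable f) (hg : Measurable g)
    (hfL : (∫⁻ x, ENNReal.ofReal |f x| ^ γ₁) < ⊤)
    (hgL : (∫⁻ x, ENNReal.ofReal |g x| ^ γ₁) < ⊤) :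
    (∫⁻ x, ENNReal.ofReal |g x| * ∫⁻ y, ENNReal.ofReal (|k x y| * |f y|)) ≤
        (∫⁻ x, (∫⁻ y, ENNReal.ofReal |k x y| ^ α₁) ^ (β₁ / α₁)) ^ (1 / β₁) *
          (∫⁻ x, ENNReal.ofReal |f x| ^ γ₁) ^ (1 / γ₁) *
          (∫⁻ x, ENNReal.ofReal |g x| ^ γ₁) ^ (1 / γ₁) ∧
      (∫⁻ x, (∫⁻ y, ENNReal.ofReal (|k x y| * |f y|)) ^ γ₁') ^ (1 / γ₁') ≤
        (∫⁻ x, (∫⁻ y, ENNReal.ofReal |k x y| ^ α₁) ^ (β₁ / α₁)) ^ (1 / β₁) *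
          (∫⁻ x, ENNReal.ofReal |f x| ^ γ₁) ^ (1 / γ₁) :=
  symmetric_kernel_bilinear_bound_general N α₁ β₁ γ₁ γ₁' hα₁ hβ₁ hγdef hγ₁ hconj k hk hsymm f g hf
    hg
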